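/- (Absorbing Game Construction) If a three-player impartial game G has at least one option and every option G' satisfies o(G') = ∅, then G is absorbing: o(G+H) = ∅ for every game H. -/

import Mathlib

inductive IGame : Type where
  | mk : List IGame → IGame

namespace IGame

def opts : IGame → List IGame
  | mk l => l

theorem sizeOf_lt_of_mem {g G : IGame} (h : g ∈ G.opts) : sizeOf g < sizeOf G := by
  cases G with
  | mk l =>
    have h2 : g ∈ l := h
    have := List.sizeOf_lt_of_mem h2
    simp only [mk.sizeOf_spec]
    omega

def add : IGame → IGame → IGame
  | G, H =>
    mk ((G.opts.attach.map fun g => add g.1 H) ++ (H.opts.attach.map fun h => add G h.1))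
termination_by G H => sizeOf G + sizeOf H
decreasing_by
  · have := sizeOf_lt_of_mem g.2; omega
  · have := sizeOf_lt_of_mem h.2; omega

inductive Player : Type where
  | N | O | P
  deriving DecidableEq

def out : IGame → Player → Prop
  | G, .N => ∃ g : {x // x ∈ G.opts}, out g.1 .P
  | G, .O => ∀ g : {x // x ∈ G.opts}, out g.1 .N
  | G, .P => ∀ g : {x // x ∈ G.opts}, out g.1 .O
termination_by G _ => sizeOf G
decreasing_by
  all_goals exact sizeOf_lt_of_mem g.2

theorem out_N {G : IGame} : out G .N ↔ ∃ g ∈ G.opts, out g .P := by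
  rw [out]
  exact ⟨fun ⟨g, h⟩ => ⟨g.1, g.2, h⟩, fun ⟨g, hm, h⟩ => ⟨⟨g, hm⟩, h⟩⟩

theorem out_O {G : IGame} : out G .O ↔ ∀ g ∈ G.opts, out g .N := by
  rw [out]
  exact ⟨fun h g hm => h ⟨g, hm⟩, fun h g => h g.1 g.2⟩

theorem out_P {G : IGame} : out G .P ↔ ∀ g ∈ G.opts, out g .O := by
  rw [out]
  exact ⟨fun h g hm => h ⟨g, hm⟩, fun h g => h g.1 g.2⟩

def outcome (G : IGame) : Set Player := {p | out G p}

def nim : Nat → IGame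
  | 0 => mk []
  | n+1 => mk ((nim n).opts ++ [nim n])

end IGame

/-!
The key fact is that if `G + H` has an outcome `p` that `G` lacks, then `H` has outcome `N`.
For an undetermined `g` it rules out `g + H ∈ P`: it produces an option `h ∈ P` of `H` that is
also in `N`, and then an option of `h` carrying all three outcomes, which is impossible.
Now induct on `H`. `G + H ∈ N` needs a `P`-option, and neither `g + H` nor `G + h` is one.
`G + H ∈ O` or `P` puts `g + H` in `N` or `O`, hence `H ∈ N`; so `H` has an option `h`, and
`G + h` would inherit an outcome.
-/

namespace IGame

theorem opts_add (G H : IGame) : (add G H).opts =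
    (G.opts.attach.map fun g => add g.1 H) ++ (H.opts.attach.map fun h => add G h.1) := by
  rw [add, opts]

theorem mem_opts_add {K G H : IGame} :
    K ∈ (add G H).opts ↔ (∃ g ∈ G.opts, add g H = K) ∨ ∃ h ∈ H.opts, add G h = K := by
  simp [opts_add]

theorem add_mem_opts_add_left {g G : IGame} (H : IGame) (hg : g ∈ G.opts) :
    add g H ∈ (add G H).opts :=
  mem_opts_add.2 (.inl ⟨g, hg, rfl⟩)

theorem add_mem_opts_add_right (G : IGame) {h H : IGame} (hh : h ∈ H.opts) :
    add G h ∈ (add G H).opts :=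
  mem_opts_add.2 (.inr ⟨h, hh, rfl⟩)

theorem outcome_eq_empty_iff {G : IGame} : outcome G = ∅ ↔ ∀ p, ¬ out G p :=
  Set.eq_empty_iff_forall_notMem

theorem not_out_N_and_O_and_P (G : IGame) : ¬ (out G .N ∧ out G .O ∧ out G .P) := by
  rintro ⟨hN, hO, hP⟩
  obtain ⟨g, hg, hgP⟩ := out_N.1 hN
  exact not_out_N_and_O_and_P g ⟨out_O.1 hO g hg, out_P.1 hP g hg, hgP⟩
termination_by sizeOf G
decreasing_by exact sizeOf_lt_of_mem hg

theorem out_congr {G H : IGame} (hGH : ∀ g ∈ G.opts, ∃ h ∈ H.opts, ∀ p, out g p ↔ out h p)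
    (hHG : ∀ h ∈ H.opts, ∃ g ∈ G.opts, ∀ p, out g p ↔ out h p) (p : Player) :
    out G p ↔ out H p := by
  cases p
  · rw [out_N, out_N]
    constructor
    · rintro ⟨g, hg, hgP⟩
      obtain ⟨h, hh, hgh⟩ := hGH g hg
      exact ⟨h, hh, (hgh _).1 hgP⟩
    · rintro ⟨h, hh, hhP⟩
      obtain ⟨g, hg, hgh⟩ := hHG h hh
      exact ⟨g, hg, (hgh _).2 hhP⟩
  all_goals
    first | rw [out_O, out_O] | rw [out_P, out_P]
    constructor
    · intro hG h hh
      obtain ⟨g, hg, hgh⟩ := hHG h hh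
      exact (hgh _).1 (hG g hg)
    · intro hH g hg
      obtain ⟨h, hh, hgh⟩ := hGH g hg
      exact (hgh _).2 (hH h hh)

theorem out_add_comm (G H : IGame) (p : Player) : out (add G H) p ↔ out (add H G) p := by
  refine out_congr (fun K hK => ?_) (fun K hK => ?_) p
  · rcases mem_opts_add.1 hK with ⟨g, hg, rfl⟩ | ⟨h, hh, rfl⟩
    · exact ⟨add H g, add_mem_opts_add_right H hg, out_add_comm g H⟩
    · exact ⟨add h G, add_mem_opts_add_left G hh, out_add_comm G h⟩
  · rcases mem_opts_add.1 hK with ⟨h, hh, rfl⟩ | ⟨g, hg, rfl⟩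
    · exact ⟨add G h, add_mem_opts_add_right G hh, out_add_comm G h⟩
    · exact ⟨add g H, add_mem_opts_add_left H hg, out_add_comm g H⟩
termination_by sizeOf G + sizeOf H
decreasing_by
  all_goals first
    | have := sizeOf_lt_of_mem hg; omega
    | have := sizeOf_lt_of_mem hh; omega

theorem out_N_of_out_add {G H : IGame} {p : Player} (hG : ¬ out G p) (hGH : out (add G H) p) :
    out H .N := by
  cases p with
  | N =>
    obtain ⟨K, hK, hKP⟩ := out_N.1 hGH
    rcases mem_opts_add.1 hK with ⟨g, hg, rfl⟩ | ⟨h, hh, rfl⟩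
    · have hgP : ¬ out g .P := fun hgP => hG (out_N.2 ⟨g, hg, hgP⟩)
      exact out_N_of_out_add hgP hKP
    · by_contra hHN
      have hhP : ¬ out h .P := fun hhP => hHN (out_N.2 ⟨h, hh, hhP⟩)
      exact hG (out_N_of_out_add hhP ((out_add_comm G h _).1 hKP))
  | O =>
    obtain ⟨g, hg, hgN⟩ : ∃ g ∈ G.opts, ¬ out g .N := by simpa [out_O] using hG
    exact out_N_of_out_add hgN (out_O.1 hGH _ (add_mem_opts_add_left H hg))
  | P =>
    obtain ⟨g, hg, hgO⟩ : ∃ g ∈ G.opts, ¬ out g .O := by simpa [out_P] using hG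
    exact out_N_of_out_add hgO (out_P.1 hGH _ (add_mem_opts_add_left H hg))
termination_by sizeOf G + sizeOf H
decreasing_by
  all_goals first
    | have := sizeOf_lt_of_mem hg; omega
    | have := sizeOf_lt_of_mem hh; omega

theorem not_out_add_P {g : IGame} (hg : ∀ p, ¬ out g p) (H : IGame) : ¬ out (add g H) .P := by
  intro hgHP
  obtain ⟨h, hh, hhP⟩ := out_N.1 (out_N_of_out_add (hg .P) hgHP)
  have hghO : out (add g h) .O := out_P.1 hgHP _ (add_mem_opts_add_right g hh)
  obtain ⟨k, hk, hkP⟩ := out_N.1 (out_N_of_out_add (hg .O) hghO)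
  have hkN : out k .N := out_N_of_out_add (hg .N) (out_O.1 hghO _ (add_mem_opts_add_right g hk))
  exact not_out_N_and_O_and_P k ⟨hkN, out_P.1 hhP k hk, hkP⟩

theorem not_out_add {G : IGame} (hne : G.opts ≠ []) (hG : ∀ g ∈ G.opts, ∀ p, ¬ out g p)
    (H : IGame) (p : Player) : ¬ out (add G H) p := by
  obtain ⟨g, hg⟩ := List.exists_mem_of_ne_nil _ hne
  intro hGH
  cases p with
  | N =>
    obtain ⟨K, hK, hKP⟩ := out_N.1 hGH
    rcases mem_opts_add.1 hK with ⟨g', hg', rfl⟩ | ⟨h, hh, rfl⟩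
    · exact not_out_add_P (hG g' hg') H hKP
    · exact not_out_add hne hG h .P hKP
  | O =>
    have hgHN := out_O.1 hGH _ (add_mem_opts_add_left H hg)
    obtain ⟨h, hh, -⟩ := out_N.1 (out_N_of_out_add (hG g hg .N) hgHN)
    exact not_out_add hne hG h .N (out_O.1 hGH _ (add_mem_opts_add_right G hh))
  | P =>
    have hgHO := out_P.1 hGH _ (add_mem_opts_add_left H hg)
    obtain ⟨h, hh, -⟩ := out_N.1 (out_N_of_out_add (hG g hg .O) hgHO)
    exact not_out_add hne hG h .O (out_P.1 hGH _ (add_mem_opts_add_right G hh))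
termination_by sizeOf H
decreasing_by all_goals exact sizeOf_lt_of_mem hh

end IGame

open IGame in
/-- (Absorbing Game Construction) If `G` has at least one option and every
option is undetermined, then `G` is absorbing. -/
theorem absorbing_construction (G : IGame) (hne : G.opts ≠ [])
    (hopts : ∀ g ∈ G.opts, IGame.outcome g = ∅) :
    ∀ H : IGame, IGame.outcome (IGame.add G H) = ∅ := by
  simp only [outcome_eq_empty_iff] at hopts ⊢
  exact not_out_add hne hopts
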